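/- arXiv:1208.4974 — 2 statements merged into one kernel-verified Lean document; each statement's English description precedes it below -/
import Mathlib

section
/- Let E be a countable set, let P and P̃ be irreducible stochastic matrices on E, and let π and ν be invariant probability vectors for P and P̃ respectively. Suppose the whole state space E is ν_m-small for P, i.e. there are an integer m ≥ 1 and a function ν_m : E → ℝ with ν_m(k) ≥ 0 for all k, ν_m(E) := ∑_k ν_m(k) > 0, and P^m(i,k) ≥ ν_m(k) for all i,k. Then ‖ν − π‖ ≤ ‖P^m − P̃^m‖ / ν_m(E) ≤ (m / ν_m(E)) · ‖P̃ − P‖. -/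
open scoped Classical ENNReal NNReal
open Filter MeasureTheory

noncomputable section

variable {E : Type*}

def matPow (P : E → E → ℝ) : ℕ → E → E → ℝ
  | 0 => fun i j => if i = j then (1 : ℝ) else 0
  | n + 1 => fun i j => ∑' k, matPow P n i k * P k j

def IsStochastic (P : E → E → ℝ) : Prop :=
  (∀ i j, 0 ≤ P i j) ∧ ∀ i, ∑' j, P i j = 1

def IsIrred (P : E → E → ℝ) : Prop :=
  ∀ i j, ∃ n, 1 ≤ n ∧ 0 < matPow P n i j

def IsProbVec (π : E → ℝ) : Prop :=
  (∀ i, 0 ≤ π i) ∧ ∑' i, π i = 1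

def InvariantFor (π : E → ℝ) (P : E → E → ℝ) : Prop :=
  ∀ j, HasSum (fun i => π i * P i j) (π j)

def vecNorm (μ : E → ℝ) : ℝ := ∑' i, |μ i|

def rowSumNorm (L : E → E → ℝ) : ℝ := ⨆ i, ∑' j, |L i j|

def ergCoeff (B : E → E → ℝ) : ℝ :=
  (1 / 2) * ⨆ p : E × E, ∑' k, |B p.1 k - B p.2 k|

def IsIntensity (Q : E → E → ℝ) : Prop :=
  (∀ i j, i ≠ j → 0 ≤ Q i j) ∧ ∀ i, HasSum (Q i) 0

def UnifBdd (Q : E → E → ℝ) : Prop := ∃ M : ℝ, ∀ i, -Q i i ≤ M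

def QIrred (Q : E → E → ℝ) : Prop :=
  ∀ i j, i ≠ j → ∃ (r : ℕ) (k : ℕ → E), 1 ≤ r ∧ k 0 = i ∧ k r = j ∧
    ∀ s < r, 0 < Q (k s) (k (s + 1))

def QInvariant (π : E → ℝ) (Q : E → E → ℝ) : Prop :=
  ∀ j, HasSum (fun i => π i * Q i j) 0

def transP (Q : E → E → ℝ) (t : ℝ) : E → E → ℝ :=
  fun i j => ∑' n : ℕ, t ^ n / (Nat.factorial n : ℝ) * matPow Q n i j

def qErgCoeff (Q : E → E → ℝ) : ℝ :=
  (1 / 2) * ⨅ p : {p : E × E // p.1 ≠ p.2},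
    (|Q p.val.1 p.val.1 - Q p.val.2 p.val.1| + |Q p.val.1 p.val.2 - Q p.val.2 p.val.2|
      - ∑' s : E, if s ≠ p.val.1 ∧ s ≠ p.val.2 then |Q p.val.1 s - Q p.val.2 s| else 0)

def vVecNorm (V : E → ℝ) (μ : E → ℝ) : ℝ≥0∞ := ∑' i, ENNReal.ofReal (|μ i| * V i)

def vMatNorm (V : E → ℝ) (L : E → E → ℝ) : ℝ≥0∞ :=
  ⨆ i, (∑' j, ENNReal.ofReal (|L i j| * V j)) / ENNReal.ofReal (V i)

def vOneNorm (V : E → ℝ) : ℝ≥0∞ := ⨆ i, 1 / ENNReal.ofReal (V i)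

-- helpers

lemma abs_tsum_le {A : Type*} (f : A → ℝ) : |∑' i, f i| ≤ ∑' i, |f i| := by
  by_cases h : Summable fun i => |f i|
  · have h2 : Summable fun i => ‖f i‖ := by simpa [Real.norm_eq_abs] using h
    have := norm_tsum_le_tsum_norm h2
    simpa [Real.norm_eq_abs] using this
  · rw [tsum_eq_zero_of_not_summable (fun hf => h hf.abs),
      tsum_eq_zero_of_not_summable h]
    simp

lemma fubini_nonneg {A B : Type*} {f : A → B → ℝ} (h0 : ∀ i j, 0 ≤ f i j)
    (hrow : ∀ i, Summable (f i)) (hsum : Summable fun i => ∑' j, f i j) :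
    (∀ j, Summable fun i => f i j) ∧ (Summable fun j => ∑' i, f i j) ∧
      (∑' j, ∑' i, f i j) = ∑' i, ∑' j, f i j := by
  have hunc : Summable (Function.uncurry f) :=
    (summable_prod_of_nonneg (fun p => h0 p.1 p.2)).2 ⟨hrow, hsum⟩
  have hswap : Summable fun p : B × A => f p.2 p.1 := hunc.prod_symm
  have h2 := (summable_prod_of_nonneg (f := fun p : B × A => f p.2 p.1)
    (fun p => h0 p.2 p.1)).1 hswap
  exact ⟨h2.1, h2.2, Summable.tsum_comm hunc⟩

lemma summable_of_tsum_one {f : E → ℝ} (h : ∑' i, f i = 1) : Summable f := by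
  by_contra hs; rw [tsum_eq_zero_of_not_summable hs] at h; norm_num at h

lemma stoch_summable {P : E → E → ℝ} (hP : IsStochastic P) (i : E) : Summable (P i) :=
  summable_of_tsum_one (hP.2 i)

lemma matPow_succ (P : E → E → ℝ) (n : ℕ) (i j : E) :
    matPow P (n + 1) i j = ∑' k, matPow P n i k * P k j := rfl

lemma matPow_stoch {P : E → E → ℝ} (hP : IsStochastic P) :
    ∀ n, IsStochastic (matPow P n) := by
  intro n
  induction n with
  | zero =>
    constructor
    · intro i j; simp only [matPow]; split <;> norm_num
    · intro i
      show (∑' j, if i = j then (1:ℝ) else 0) = 1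
      rw [show (fun j => if i = j then (1:ℝ) else 0) = fun j => if j = i then (1:ℝ) else 0 by
        funext j; simp [eq_comm]]
      exact tsum_ite_eq i 1
  | succ n ih =>
    have h0 : ∀ i k j, 0 ≤ matPow P n i k * P k j :=
      fun i k j => mul_nonneg (ih.1 i k) (hP.1 k j)
    constructor
    · intro i j
      exact tsum_nonneg fun k => h0 i k j
    · intro i
      rw [show (fun j => matPow P (n+1) i j) = fun j => ∑' k, matPow P n i k * P k j from rfl]
      have hrow : ∀ k, Summable fun j => matPow P n i k * P k j :=
        fun k => (stoch_summable hP k).mul_left _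
      have hsum : Summable fun k => ∑' j, matPow P n i k * P k j := by
        have : ∀ k, (∑' j, matPow P n i k * P k j) = matPow P n i k := by
          intro k; rw [tsum_mul_left, hP.2 k, mul_one]
        rw [funext this]
        exact stoch_summable ih i
      obtain ⟨_, _, hcomm⟩ := fubini_nonneg (h0 i) hrow hsum
      rw [hcomm]
      calc (∑' k, ∑' j, matPow P n i k * P k j) = ∑' k, matPow P n i k := by
            congr 1; funext k; rw [tsum_mul_left, hP.2 k, mul_one]
        _ = 1 := ih.2 i

lemma entry_le_one {P : E → E → ℝ} (hP : IsStochastic P) (k j : E) : P k j ≤ 1 := by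
  calc P k j ≤ ∑' j', P k j' := Summable.le_tsum (stoch_summable hP k) j (fun b _ => hP.1 k b)
    _ = 1 := hP.2 k

lemma inv_matPow {P : E → E → ℝ} {pi : E → ℝ} (hP : IsStochastic P)
    (hpi0 : ∀ i, 0 ≤ pi i) (hpis : Summable pi) (hinv : InvariantFor pi P) :
    ∀ n, InvariantFor pi (matPow P n) := by
  intro n
  induction n with
  | zero =>
    intro j
    have : (fun i => pi i * matPow P 0 i j) = fun i => if i = j then pi j else 0 := by
      funext i; simp only [matPow]; split
      · rename_i h; rw [h, mul_one]
      · rw [mul_zero]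
    rw [this]
    exact hasSum_ite_eq j (pi j)
  | succ n ih =>
    intro j
    have hPn := matPow_stoch hP n
    have h0 : ∀ i k, 0 ≤ pi i * (matPow P n i k * P k j) :=
      fun i k => mul_nonneg (hpi0 i) (mul_nonneg (hPn.1 i k) (hP.1 k j))
    have hinner : ∀ i, Summable fun k => matPow P n i k * P k j := fun i =>
      (stoch_summable hPn i).of_nonneg_of_le
        (fun k => mul_nonneg (hPn.1 i k) (hP.1 k j))
        (fun k => mul_le_of_le_one_right (hPn.1 i k) (entry_le_one hP k j))
    have hbound : ∀ i, (∑' k, matPow P n i k * P k j) ≤ 1 := fun i => by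
      calc (∑' k, matPow P n i k * P k j) ≤ ∑' k, matPow P n i k :=
            Summable.tsum_le_tsum (fun k => mul_le_of_le_one_right (hPn.1 i k) (entry_le_one hP k j))
              (hinner i) (stoch_summable hPn i)
        _ = 1 := hPn.2 i
    have hrow : ∀ i, Summable fun k => pi i * (matPow P n i k * P k j) :=
      fun i => (hinner i).mul_left _
    have hsum : Summable fun i => ∑' k, pi i * (matPow P n i k * P k j) := by
      refine hpis.of_nonneg_of_le (fun i => tsum_nonneg (h0 i)) (fun i => ?_)
      rw [tsum_mul_left]
      calc pi i * (∑' k, matPow P n i k * P k j) ≤ pi i * 1 :=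
            mul_le_mul_of_nonneg_left (hbound i) (hpi0 i)
        _ = pi i := mul_one _
    obtain ⟨hcol, hs2, hcomm⟩ := fubini_nonneg h0 hrow hsum
    have hval : ∀ k, (∑' i, pi i * (matPow P n i k * P k j)) = pi k * P k j := by
      intro k
      have : (fun i => pi i * (matPow P n i k * P k j))
          = fun i => (pi i * matPow P n i k) * P k j := by funext i; ring
      rw [this, tsum_mul_right, (ih k).tsum_eq]
    have heq : (fun i => pi i * matPow P (n + 1) i j)
        = fun i => ∑' k, pi i * (matPow P n i k * P k j) := by
      funext i; rw [matPow_succ, tsum_mul_left]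
    rw [heq]
    refine hsum.hasSum_iff.2 ?_
    rw [← hcomm]
    calc (∑' k, ∑' i, pi i * (matPow P n i k * P k j)) = ∑' k, pi k * P k j := by
          congr 1; funext k; exact hval k
      _ = pi j := (hinv j).tsum_eq

lemma summable_mul_entry {P : E → E → ℝ} (hP : IsStochastic P) {g : E → ℝ}
    (hg : Summable g) (j : E) : Summable fun k => g k * P k j :=
  summable_abs_iff.1 (hg.abs.of_nonneg_of_le (fun _ => abs_nonneg _) (fun k => by
    rw [abs_mul, abs_of_nonneg (hP.1 k j)]
    exact mul_le_of_le_one_right (abs_nonneg _) (entry_le_one hP k j)))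

lemma contraction {P : E → E → ℝ} {nm μ : E → ℝ} (hP : IsStochastic P)
    (hnn : ∀ k, 0 ≤ nm k) (hsmall : ∀ i k, nm k ≤ P i k)
    (hμ : Summable μ) (hμ0 : ∑' i, μ i = 0) :
    (Summable fun j => |∑' i, μ i * P i j|) ∧
      ∑' j, |∑' i, μ i * P i j| ≤ (1 - ∑' k, nm k) * ∑' i, |μ i| := by
  rcases isEmpty_or_nonempty E with hE | hE
  · exact ⟨summable_empty, by simp [tsum_empty]⟩
  obtain ⟨i₀⟩ := hE
  have hnm_sum : Summable nm := (stoch_summable hP i₀).of_nonneg_of_le hnn (hsmall i₀)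
  have hB : ∀ j, Summable fun i => μ i * P i j := fun j => summable_mul_entry hP hμ j
  have hstep : ∀ j, (∑' i, μ i * P i j) = ∑' i, μ i * (P i j - nm j) := by
    intro j
    have h1 : Summable fun i => μ i * nm j := hμ.mul_right _
    have he : (fun i => μ i * (P i j - nm j)) = fun i => μ i * P i j - μ i * nm j := by
      funext i; ring
    rw [he, Summable.tsum_sub (hB j) h1, tsum_mul_right, hμ0, zero_mul, sub_zero]
  have habsle : ∀ j, |∑' i, μ i * P i j| ≤ ∑' i, |μ i| * (P i j - nm j) := by
    intro j
    rw [hstep j]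
    refine le_trans (abs_tsum_le _) (le_of_eq ?_)
    congr 1; funext i
    rw [abs_mul, abs_of_nonneg (sub_nonneg.2 (hsmall i j))]
  have h0 : ∀ i j, 0 ≤ |μ i| * (P i j - nm j) :=
    fun i j => mul_nonneg (abs_nonneg _) (sub_nonneg.2 (hsmall i j))
  have hrow : ∀ i, Summable fun j => |μ i| * (P i j - nm j) :=
    fun i => ((stoch_summable hP i).sub hnm_sum).mul_left _
  have hrowval : ∀ i, (∑' j, |μ i| * (P i j - nm j)) = |μ i| * (1 - ∑' k, nm k) := by
    intro i
    rw [tsum_mul_left, Summable.tsum_sub (stoch_summable hP i) hnm_sum, hP.2 i]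
  have hsum : Summable fun i => ∑' j, |μ i| * (P i j - nm j) :=
    ((hμ.abs.mul_right (1 - ∑' k, nm k))).congr (fun i => (hrowval i).symm)
  obtain ⟨_, hs2, hcomm⟩ := fubini_nonneg h0 hrow hsum
  have hLHS_sum : Summable fun j => |∑' i, μ i * P i j| :=
    hs2.of_nonneg_of_le (fun j => abs_nonneg _) habsle
  refine ⟨hLHS_sum, ?_⟩
  calc ∑' j, |∑' i, μ i * P i j| ≤ ∑' j, ∑' i, |μ i| * (P i j - nm j) :=
        Summable.tsum_le_tsum habsle hLHS_sum hs2
    _ = ∑' i, ∑' j, |μ i| * (P i j - nm j) := hcomm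
    _ = ∑' i, |μ i| * (1 - ∑' k, nm k) := by congr 1; funext i; exact hrowval i
    _ = (1 - ∑' k, nm k) * ∑' i, |μ i| := by rw [tsum_mul_right]; ring

lemma rowabs_summable {P Pt : E → E → ℝ} (hP : IsStochastic P) (hPt : IsStochastic Pt)
    (i : E) : (Summable fun j => |P i j - Pt i j|) ∧ ∑' j, |P i j - Pt i j| ≤ 2 := by
  have hs : Summable fun j => P i j + Pt i j :=
    (stoch_summable hP i).add (stoch_summable hPt i)
  have hle : ∀ j, |P i j - Pt i j| ≤ P i j + Pt i j := fun j => by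
    have := abs_sub (P i j) (Pt i j)
    rwa [abs_of_nonneg (hP.1 i j), abs_of_nonneg (hPt.1 i j)] at this
  have h1 : Summable fun j => |P i j - Pt i j| :=
    hs.of_nonneg_of_le (fun _ => abs_nonneg _) hle
  refine ⟨h1, ?_⟩
  calc (∑' j, |P i j - Pt i j|) ≤ ∑' j, (P i j + Pt i j) := Summable.tsum_le_tsum hle h1 hs
    _ = 2 := by
      rw [Summable.tsum_add (stoch_summable hP i) (stoch_summable hPt i), hP.2 i, hPt.2 i]
      norm_num

lemma row_diff_bound {P Pt : E → E → ℝ} (hP : IsStochastic P) (hPt : IsStochastic Pt)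
    {C : ℝ} (hC0 : 0 ≤ C) (hC : ∀ k, ∑' j, |P k j - Pt k j| ≤ C) :
    ∀ n i, ∑' j, |matPow P n i j - matPow Pt n i j| ≤ n * C := by
  intro n
  induction n with
  | zero =>
    intro i
    have he : (fun j => |matPow P 0 i j - matPow Pt 0 i j|) = fun _ => (0:ℝ) := by
      funext j; simp [matPow]
    rw [he]; simp
  | succ n ih =>
    intro i
    have hPn := matPow_stoch hP n
    have hPtn := matPow_stoch hPt n
    have hPm := matPow_stoch hP (n+1)
    have hPtm := matPow_stoch hPt (n+1)
    have habsD : Summable fun k => |matPow P n i k - matPow Pt n i k| :=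
      (rowabs_summable hPn hPtn i).1
    -- decomposition
    have hg1s : ∀ j, Summable fun k => (matPow P n i k - matPow Pt n i k) * P k j :=
      fun j => summable_mul_entry hP (summable_abs_iff.1 habsD) j
    have hg2abs : ∀ j, Summable fun k => matPow Pt n i k * |P k j - Pt k j| := by
      intro j
      refine ((stoch_summable hPtn i).mul_right 2).of_nonneg_of_le
        (fun k => mul_nonneg (hPtn.1 i k) (abs_nonneg _)) (fun k => ?_)
      refine mul_le_mul_of_nonneg_left ?_ (hPtn.1 i k)
      have := abs_sub (P k j) (Pt k j)
      rw [abs_of_nonneg (hP.1 k j), abs_of_nonneg (hPt.1 k j)] at this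
      have h1 := entry_le_one hP k j
      have h2 := entry_le_one hPt k j
      linarith
    have hg2s : ∀ j, Summable fun k => matPow Pt n i k * (P k j - Pt k j) := by
      intro j
      refine summable_abs_iff.1 (((hg2abs j)).congr (fun k => ?_))
      rw [abs_mul, abs_of_nonneg (hPtn.1 i k)]
    have hdec : ∀ j, matPow P (n+1) i j - matPow Pt (n+1) i j =
        (∑' k, (matPow P n i k - matPow Pt n i k) * P k j)
          + ∑' k, matPow Pt n i k * (P k j - Pt k j) := by
      intro j
      have s1 : Summable fun k => matPow P n i k * P k j :=
        summable_mul_entry hP (stoch_summable hPn i) j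
      have s2 : Summable fun k => matPow Pt n i k * P k j :=
        summable_mul_entry hP (stoch_summable hPtn i) j
      have s3 : Summable fun k => matPow Pt n i k * Pt k j :=
        summable_mul_entry hPt (stoch_summable hPtn i) j
      have e1 : (∑' k, (matPow P n i k - matPow Pt n i k) * P k j)
          = (∑' k, matPow P n i k * P k j) - ∑' k, matPow Pt n i k * P k j := by
        rw [← Summable.tsum_sub s1 s2]; congr 1; funext k; ring
      have e2 : (∑' k, matPow Pt n i k * (P k j - Pt k j))
          = (∑' k, matPow Pt n i k * P k j) - ∑' k, matPow Pt n i k * Pt k j := by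
        rw [← Summable.tsum_sub s2 s3]; congr 1; funext k; ring
      rw [e1, e2, matPow_succ, matPow_succ]; ring
    have habs : ∀ j, |matPow P (n+1) i j - matPow Pt (n+1) i j| ≤
        (∑' k, |matPow P n i k - matPow Pt n i k| * P k j)
          + ∑' k, matPow Pt n i k * |P k j - Pt k j| := by
      intro j
      rw [hdec j]
      refine le_trans (abs_add_le _ _) (add_le_add ?_ ?_)
      · refine le_trans (abs_tsum_le _) (le_of_eq ?_)
        congr 1; funext k; rw [abs_mul, abs_of_nonneg (hP.1 k j)]
      · refine le_trans (abs_tsum_le _) (le_of_eq ?_)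
        congr 1; funext k; rw [abs_mul, abs_of_nonneg (hPtn.1 i k)]
    -- fubini for F1
    obtain ⟨_, hs2a, hcomm1⟩ := fubini_nonneg
      (f := fun k j => |matPow P n i k - matPow Pt n i k| * P k j)
      (fun k j => mul_nonneg (abs_nonneg _) (hP.1 k j))
      (fun k => (stoch_summable hP k).mul_left _)
      (habsD.congr (fun k => by rw [tsum_mul_left, hP.2 k, mul_one]))
    -- fubini for F2
    have hrow2 : ∀ k, Summable fun j => matPow Pt n i k * |P k j - Pt k j| :=
      fun k => ((rowabs_summable hP hPt k).1).mul_left _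
    have hrowsum2 : Summable fun k => ∑' j, matPow Pt n i k * |P k j - Pt k j| := by
      refine ((stoch_summable hPtn i).mul_right C).of_nonneg_of_le
        (fun k => tsum_nonneg (fun j => mul_nonneg (hPtn.1 i k) (abs_nonneg _)))
        (fun k => ?_)
      rw [tsum_mul_left]
      exact mul_le_mul_of_nonneg_left (hC k) (hPtn.1 i k)
    obtain ⟨_, hs2b, hcomm2⟩ := fubini_nonneg
      (f := fun k j => matPow Pt n i k * |P k j - Pt k j|)
      (fun k j => mul_nonneg (hPtn.1 i k) (abs_nonneg _)) hrow2 hrowsum2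
    have hRHS : Summable fun j => (∑' k, |matPow P n i k - matPow Pt n i k| * P k j)
        + ∑' k, matPow Pt n i k * |P k j - Pt k j| := hs2a.add hs2b
    have hLHS : Summable fun j => |matPow P (n+1) i j - matPow Pt (n+1) i j| :=
      hRHS.of_nonneg_of_le (fun _ => abs_nonneg _) habs
    have t1 : (∑' j, ∑' k, |matPow P n i k - matPow Pt n i k| * P k j) ≤ n * C := by
      rw [hcomm1]
      calc (∑' k, ∑' j, |matPow P n i k - matPow Pt n i k| * P k j)
          = ∑' k, |matPow P n i k - matPow Pt n i k| := by
            congr 1; funext k; rw [tsum_mul_left, hP.2 k, mul_one]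
        _ ≤ n * C := ih i
    have t2 : (∑' j, ∑' k, matPow Pt n i k * |P k j - Pt k j|) ≤ C := by
      rw [hcomm2]
      calc (∑' k, ∑' j, matPow Pt n i k * |P k j - Pt k j|)
          = ∑' k, matPow Pt n i k * ∑' j, |P k j - Pt k j| := by
            congr 1; funext k; rw [tsum_mul_left]
        _ ≤ ∑' k, matPow Pt n i k * C := by
            refine Summable.tsum_le_tsum (fun k => mul_le_mul_of_nonneg_left (hC k) (hPtn.1 i k))
              (hrowsum2.congr (fun k => by rw [tsum_mul_left]))
              ((stoch_summable hPtn i).mul_right C)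
        _ = C := by rw [tsum_mul_right, hPtn.2 i, one_mul]
    calc (∑' j, |matPow P (n+1) i j - matPow Pt (n+1) i j|)
        ≤ ∑' j, ((∑' k, |matPow P n i k - matPow Pt n i k| * P k j)
            + ∑' k, matPow Pt n i k * |P k j - Pt k j|) :=
          Summable.tsum_le_tsum habs hLHS hRHS
      _ = (∑' j, ∑' k, |matPow P n i k - matPow Pt n i k| * P k j)
            + ∑' j, ∑' k, matPow Pt n i k * |P k j - Pt k j| := Summable.tsum_add hs2a hs2b
      _ ≤ n * C + C := add_le_add t1 t2
      _ = (n + 1 : ℕ) * C := by push_cast; ring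


theorem stmt2' {E : Type*} [Countable E] (P Pt : E → E → ℝ) (pi nu : E → ℝ)
    (m : ℕ) (nm : E → ℝ)
    (hP : IsStochastic P) (hPt : IsStochastic Pt)
    (hpi : IsProbVec pi) (hnu : IsProbVec nu)
    (hpiinv : InvariantFor pi P) (hnuinv : InvariantFor nu Pt)
    (hnn : ∀ k, 0 ≤ nm k) (hpos : 0 < ∑' k, nm k)
    (hsmall : ∀ i k, nm k ≤ matPow P m i k) :
    (∑' i, |nu i - pi i|) ≤
        (⨆ i, ∑' j, |matPow P m i j - matPow Pt m i j|) / (∑' k, nm k) ∧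
      (⨆ i, ∑' j, |matPow P m i j - matPow Pt m i j|) / (∑' k, nm k) ≤
        (m / ∑' k, nm k) * ⨆ i, ∑' j, |Pt i j - P i j| := by
  have hEne : Nonempty E := by
    by_contra h
    rw [not_nonempty_iff] at h
    rw [tsum_empty] at hpos
    exact lt_irrefl 0 hpos
  have i₀ : E := Classical.choice hEne
  have hPm := matPow_stoch hP m
  have hPtm := matPow_stoch hPt m
  have hnus : Summable nu := summable_of_tsum_one hnu.2
  have hpis : Summable pi := summable_of_tsum_one hpi.2
  have hμsum : Summable fun i => nu i - pi i := hnus.sub hpis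
  have hμ0 : (∑' i, (nu i - pi i)) = 0 := by
    rw [Summable.tsum_sub hnus hpis, hnu.2, hpi.2]; ring
  have hnum := inv_matPow hPt hnu.1 hnus hnuinv m
  have hpim := inv_matPow hP hpi.1 hpis hpiinv m
  have hΔbdd : BddAbove (Set.range fun i => ∑' j, |matPow P m i j - matPow Pt m i j|) :=
    ⟨2, by rintro _ ⟨i, rfl⟩; exact (rowabs_summable hPm hPtm i).2⟩
  have hΔ0 : 0 ≤ ⨆ i, ∑' j, |matPow P m i j - matPow Pt m i j| :=
    le_trans (tsum_nonneg fun j => abs_nonneg _) (le_ciSup hΔbdd i₀)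
  have hDbdd : BddAbove (Set.range fun i => ∑' j, |Pt i j - P i j|) :=
    ⟨2, by rintro _ ⟨i, rfl⟩; exact (rowabs_summable hPt hP i).2⟩
  have hD0 : 0 ≤ ⨆ i, ∑' j, |Pt i j - P i j| :=
    le_trans (tsum_nonneg fun j => abs_nonneg _) (le_ciSup hDbdd i₀)
  have hC : ∀ k, (∑' j, |P k j - Pt k j|) ≤ ⨆ i, ∑' j, |Pt i j - P i j| := by
    intro k
    calc (∑' j, |P k j - Pt k j|) = ∑' j, |Pt k j - P k j| :=
          tsum_congr fun j => abs_sub_comm _ _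
      _ ≤ ⨆ i, ∑' j, |Pt i j - P i j| := le_ciSup hDbdd k
  obtain ⟨hBsum0, hBle0⟩ := contraction hPm hnn hsmall hμsum hμ0
  set A := fun j => ∑' i, nu i * (matPow Pt m i j - matPow P m i j) with hA
  set B := fun j => ∑' i, (nu i - pi i) * matPow P m i j with hB
  have hBsum : Summable fun j => |B j| := hBsum0
  have hBle : (∑' j, |B j|) ≤ (1 - ∑' k, nm k) * ∑' i, |nu i - pi i| := hBle0
  have hdec : ∀ j, nu j - pi j = A j + B j := by
    intro j
    have s1 : Summable fun i => nu i * matPow Pt m i j := (hnum j).summable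
    have s2 : Summable fun i => nu i * matPow P m i j := summable_mul_entry hPm hnus j
    have s3 : Summable fun i => pi i * matPow P m i j := (hpim j).summable
    have e1 : A j = (∑' i, nu i * matPow Pt m i j) - ∑' i, nu i * matPow P m i j := by
      simp only [hA]
      rw [← Summable.tsum_sub s1 s2]
      congr 1; funext i; ring
    have e2 : B j = (∑' i, nu i * matPow P m i j) - ∑' i, pi i * matPow P m i j := by
      simp only [hB]
      rw [← Summable.tsum_sub s2 s3]
      congr 1; funext i; ring
    have e3 := (hnum j).tsum_eq
    have e4 := (hpim j).tsum_eq
    rw [e1, e2, e3, e4]; ring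
  have hrowΔ : ∀ i, (∑' j, nu i * |matPow Pt m i j - matPow P m i j|)
      = nu i * ∑' j, |matPow P m i j - matPow Pt m i j| := by
    intro i
    rw [tsum_mul_left]
    congr 1
    exact tsum_congr fun j => abs_sub_comm _ _
  have hsumA : Summable fun i => nu i * ∑' j, |matPow P m i j - matPow Pt m i j| :=
    (hnus.mul_right 2).of_nonneg_of_le
      (fun i => mul_nonneg (hnu.1 i) (tsum_nonneg fun _ => abs_nonneg _))
      (fun i => mul_le_mul_of_nonneg_left (rowabs_summable hPm hPtm i).2 (hnu.1 i))
  obtain ⟨_, hs2A, hcommA⟩ := fubini_nonneg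
    (f := fun i j => nu i * |matPow Pt m i j - matPow P m i j|)
    (fun i j => mul_nonneg (hnu.1 i) (abs_nonneg _))
    (fun i => ((rowabs_summable hPtm hPm i).1).mul_left _)
    (hsumA.congr fun i => (hrowΔ i).symm)
  have habsA : ∀ j, |A j| ≤ ∑' i, nu i * |matPow Pt m i j - matPow P m i j| := by
    intro j
    rw [hA]
    refine le_trans (abs_tsum_le _) (le_of_eq ?_)
    congr 1; funext i; rw [abs_mul, abs_of_nonneg (hnu.1 i)]
  have hAsum : Summable fun j => |A j| :=
    hs2A.of_nonneg_of_le (fun _ => abs_nonneg _) habsA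
  have hAle : (∑' j, |A j|) ≤ ⨆ i, ∑' j, |matPow P m i j - matPow Pt m i j| := by
    calc (∑' j, |A j|) ≤ ∑' j, ∑' i, nu i * |matPow Pt m i j - matPow P m i j| :=
          Summable.tsum_le_tsum habsA hAsum hs2A
      _ = ∑' i, ∑' j, nu i * |matPow Pt m i j - matPow P m i j| := hcommA
      _ = ∑' i, nu i * ∑' j, |matPow P m i j - matPow Pt m i j| :=
          tsum_congr hrowΔ
      _ ≤ ∑' i, nu i * ⨆ i, ∑' j, |matPow P m i j - matPow Pt m i j| :=
          Summable.tsum_le_tsum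
            (fun i => mul_le_mul_of_nonneg_left (le_ciSup hΔbdd i) (hnu.1 i))
            hsumA (hnus.mul_right _)
      _ = ⨆ i, ∑' j, |matPow P m i j - matPow Pt m i j| := by
          rw [tsum_mul_right, hnu.2, one_mul]
  have hveceq : (∑' i, |nu i - pi i|) = ∑' j, |A j + B j| :=
    tsum_congr fun j => by rw [hdec j]
  have hvle : (∑' i, |nu i - pi i|) ≤
      (⨆ i, ∑' j, |matPow P m i j - matPow Pt m i j|)
        + (1 - ∑' k, nm k) * ∑' i, |nu i - pi i| := by
    calc (∑' i, |nu i - pi i|) = ∑' j, |A j + B j| := hveceq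
      _ ≤ ∑' j, (|A j| + |B j|) :=
          Summable.tsum_le_tsum (fun j => abs_add_le _ _)
            ((hAsum.add hBsum).of_nonneg_of_le (fun _ => abs_nonneg _)
              (fun j => abs_add_le _ _))
            (hAsum.add hBsum)
      _ = (∑' j, |A j|) + ∑' j, |B j| := Summable.tsum_add hAsum hBsum
      _ ≤ (⨆ i, ∑' j, |matPow P m i j - matPow Pt m i j|)
            + (1 - ∑' k, nm k) * ∑' i, |nu i - pi i| := add_le_add hAle hBle
  constructor
  · rw [le_div_iff₀ hpos]
    nlinarith [hvle]
  · have hΔle : (⨆ i, ∑' j, |matPow P m i j - matPow Pt m i j|)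
        ≤ m * ⨆ i, ∑' j, |Pt i j - P i j| :=
      ciSup_le fun i => row_diff_bound hP hPt hD0 hC m i
    rw [div_mul_eq_mul_div]
    exact div_le_div_of_nonneg_right hΔle hpos.le


/-- small-set perturbation bound:
‖ν − π‖ ≤ ‖P^m − P̃^m‖/ν_m(E) ≤ (m/ν_m(E))·‖P̃ − P‖. -/
theorem stmt2 {E : Type*} [Countable E] (P Pt : E → E → ℝ) (pi nu : E → ℝ)
    (m : ℕ) (nm : E → ℝ)
    (hP : IsStochastic P) (hPt : IsStochastic Pt)
    (hPirr : IsIrred P) (hPtirr : IsIrred Pt)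
    (hpi : IsProbVec pi) (hnu : IsProbVec nu)
    (hpiinv : InvariantFor pi P) (hnuinv : InvariantFor nu Pt)
    (hm : 1 ≤ m)
    (hnn : ∀ k, 0 ≤ nm k) (hpos : 0 < ∑' k, nm k)
    (hsmall : ∀ i k, nm k ≤ matPow P m i k) :
    vecNorm (fun i => nu i - pi i) ≤
        rowSumNorm (fun i j => matPow P m i j - matPow Pt m i j) / (∑' k, nm k) ∧
      rowSumNorm (fun i j => matPow P m i j - matPow Pt m i j) / (∑' k, nm k) ≤
        (m / ∑' k, nm k) * rowSumNorm (fun i j => Pt i j - P i j) := by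
  simp only [vecNorm, rowSumNorm]
  exact stmt2' P Pt pi nu m nm hP hPt hpi hnu hpiinv hnuinv hnn hpos hsmall

end
end

section
/- Let E be a countable set, let P and P̃ be irreducible stochastic matrices on E, and let π and ν be invariant probability vectors for P and P̃ respectively. Suppose for some integer m ≥ 1 the quantities δ_m(k) := inf_{i∈E} P^m(i,k) satisfy ∑_k δ_m(k) > 0. Then ‖ν − π‖ ≤ ‖P^m − P̃^m‖ / (∑_k δ_m(k)) ≤ (m / ∑_k δ_m(k)) · ‖P̃ − P‖. -/
/-!
Write `A = P^m`, `Ã = P̃^m` and `d = ∑_k δ_m(k)`. Invariance gives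
`π - ν = (π - ν) A + ν (A - Ã)`. Since `π - ν` has total mass zero, `(π - ν) A = (π - ν) (A - 𝟙 δ_m)`,
and `A - 𝟙 δ_m` is a nonnegative matrix with row sums `1 - d`, so `‖(π - ν) A‖ ≤ (1 - d) ‖π - ν‖`
(Doeblin's contraction). Hence `d ‖ν - π‖ ≤ ‖A - Ã‖`. The second inequality comes from the
telescoping identity `P^(n+1) - P̃^(n+1) = (P^n - P̃^n) P + P̃^n (P - P̃)`, which gives
`‖P^n - P̃^n‖ ≤ n ‖P - P̃‖`.
-/

open scoped Classical ENNReal NNReal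
open Filter MeasureTheory

noncomputable section

variable {E : Type*}

def vecMul (μ : E → ℝ) (L : E → E → ℝ) : E → ℝ := fun j => ∑' i, μ i * L i j

lemma matPow_succ_apply (P : E → E → ℝ) (n : ℕ) (i : E) :
    matPow P (n + 1) i = vecMul (matPow P n i) P := rfl

lemma vecNorm_sub_comm (x y : E → ℝ) :
    vecNorm (fun i => x i - y i) = vecNorm (fun i => y i - x i) :=
  tsum_congr fun _ => abs_sub_comm _ _

lemma vecNorm_le_of_abs_le_add {f x y : E → ℝ} (hx : Summable x) (hy : Summable y)
    (h : ∀ i, |f i| ≤ |x i| + |y i|) : vecNorm f ≤ vecNorm x + vecNorm y := by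
  have hxy : Summable fun i => |x i| + |y i| := hx.abs.add hy.abs
  calc vecNorm f ≤ ∑' i, (|x i| + |y i|) :=
        Summable.tsum_le_tsum h (Summable.of_nonneg_of_le (fun _ => abs_nonneg _) h hxy) hxy
    _ = vecNorm x + vecNorm y := hx.abs.tsum_add hy.abs

lemma summable_of_tsum_ne_zero {f : E → ℝ} (h : ∑' i, f i ≠ 0) : Summable f := by
  by_contra hs
  exact h (tsum_eq_zero_of_not_summable hs)

lemma summable_mul_of_abs_le {μ g : E → ℝ} {c : ℝ} (hμ : Summable μ) (hg : ∀ i, |g i| ≤ c) :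
    Summable fun i => μ i * g i :=
  Summable.of_norm_bounded (hμ.abs.mul_right c) fun i => by
    rw [Real.norm_eq_abs, abs_mul]
    exact mul_le_mul_of_nonneg_left (hg i) (abs_nonneg _)

section VecMul

variable {μ μ' : E → ℝ} {L L' : E → E → ℝ} {c : ℝ}

lemma vecMul_sub_left (h : ∀ j, Summable fun i => μ i * L i j)
    (h' : ∀ j, Summable fun i => μ' i * L i j) :
    vecMul (fun i => μ i - μ' i) L = fun j => vecMul μ L j - vecMul μ' L j :=
  funext fun j => by
    simp only [vecMul, sub_mul]
    exact (h j).tsum_sub (h' j)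

lemma vecMul_sub_right (h : ∀ j, Summable fun i => μ i * L i j)
    (h' : ∀ j, Summable fun i => μ i * L' i j) :
    vecMul μ (fun i j => L i j - L' i j) = fun j => vecMul μ L j - vecMul μ L' j :=
  funext fun j => by
    simp only [vecMul, mul_sub]
    exact (h j).tsum_sub (h' j)

lemma summable_abs_mul_abs (hμ : Summable μ) (hL : ∀ i, Summable (L i))
    (hc : ∀ i, vecNorm (L i) ≤ c) :
    Summable (Function.uncurry fun i j => |μ i| * |L i j|) := by
  have h0 : 0 ≤ Function.uncurry fun i j => |μ i| * |L i j| :=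
    fun p => mul_nonneg (abs_nonneg _) (abs_nonneg _)
  refine (summable_prod_of_nonneg h0).2 ⟨fun i => (hL i).abs.mul_left |μ i|, ?_⟩
  refine Summable.of_nonneg_of_le (fun i => tsum_nonneg fun j => h0 (i, j)) (fun i => ?_)
    (hμ.abs.mul_right c)
  simp only [Function.uncurry_apply_pair, tsum_mul_left]
  exact mul_le_mul_of_nonneg_left (hc i) (abs_nonneg _)

lemma summable_uncurry_mul (hμ : Summable μ) (hL : ∀ i, Summable (L i))
    (hc : ∀ i, vecNorm (L i) ≤ c) : Summable (Function.uncurry fun i j => μ i * L i j) :=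
  .of_abs <| (summable_abs_mul_abs hμ hL hc).congr fun _ => (abs_mul _ _).symm

lemma abs_vecMul_le (hμ : Summable μ) (hL : ∀ i, Summable (L i))
    (hc : ∀ i, vecNorm (L i) ≤ c) (j : E) : |vecMul μ L j| ≤ ∑' i, |μ i| * |L i j| := by
  have hs : Summable fun i => ‖μ i * L i j‖ := by
    simpa [abs_mul] using (summable_abs_mul_abs hμ hL hc).prod_symm.prod_factor j
  simpa [vecMul, abs_mul] using norm_tsum_le_tsum_norm hs

lemma summable_vecMul (hμ : Summable μ) (hL : ∀ i, Summable (L i))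
    (hc : ∀ i, vecNorm (L i) ≤ c) : Summable (vecMul μ L) :=
  Summable.of_norm_bounded (summable_abs_mul_abs hμ hL hc).prod_symm.prod
    (abs_vecMul_le hμ hL hc)

lemma tsum_vecMul (hμ : Summable μ) (hL : ∀ i, Summable (L i))
    (hc : ∀ i, vecNorm (L i) ≤ c) : ∑' j, vecMul μ L j = ∑' i, μ i * ∑' j, L i j := by
  simp only [vecMul, ← tsum_mul_left]
  exact (summable_uncurry_mul hμ hL hc).tsum_comm

lemma vecNorm_vecMul_le (hμ : Summable μ) (hL : ∀ i, Summable (L i))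
    (hc : ∀ i, vecNorm (L i) ≤ c) : vecNorm (vecMul μ L) ≤ c * vecNorm μ := by
  have hu := summable_abs_mul_abs hμ hL hc
  calc vecNorm (vecMul μ L) ≤ ∑' j, ∑' i, |μ i| * |L i j| :=
        Summable.tsum_le_tsum (abs_vecMul_le hμ hL hc) (summable_vecMul hμ hL hc).abs
          hu.prod_symm.prod
    _ = ∑' i, |μ i| * vecNorm (L i) := by
        rw [hu.tsum_comm]
        simp only [vecNorm, tsum_mul_left]
    _ ≤ ∑' i, |μ i| * c :=
        Summable.tsum_le_tsum (fun i => mul_le_mul_of_nonneg_left (hc i) (abs_nonneg _))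
          (by simpa [vecNorm, tsum_mul_left] using hu.prod) (hμ.abs.mul_right c)
    _ = c * vecNorm μ := by rw [tsum_mul_right, mul_comm, vecNorm]

lemma vecMul_assoc {B : E → E → ℝ} {c' : ℝ} (hμ : Summable μ) (hL : ∀ i, Summable (L i))
    (hc : ∀ i, vecNorm (L i) ≤ c) (hB : ∀ k j, |B k j| ≤ c') :
    vecMul μ (fun i => vecMul (L i) B) = vecMul (vecMul μ L) B := by
  funext j
  have hs : Summable (Function.uncurry fun i k => μ i * (L i k * B k j)) := by
    refine Summable.of_norm_bounded ((summable_abs_mul_abs hμ hL hc).mul_right c') fun ⟨i, k⟩ => ?_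
    simp only [Function.uncurry_apply_pair, Real.norm_eq_abs, abs_mul, ← mul_assoc]
    exact mul_le_mul_of_nonneg_left (hB _ _) (by positivity)
  simp only [vecMul, ← tsum_mul_left, ← tsum_mul_right, ← hs.tsum_comm, mul_assoc]

end VecMul

lemma IsProbVec.summable {π : E → ℝ} (h : IsProbVec π) : Summable π :=
  summable_of_tsum_ne_zero (h.2 ▸ one_ne_zero)

lemma IsProbVec.vecNorm_eq_one {π : E → ℝ} (h : IsProbVec π) : vecNorm π = 1 :=
  (tsum_congr fun i => abs_of_nonneg (h.1 i)).trans h.2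

namespace IsStochastic

variable {P Pt : E → E → ℝ}

lemma summable_row (h : IsStochastic P) (i : E) : Summable (P i) :=
  summable_of_tsum_ne_zero ((h.2 i) ▸ one_ne_zero)

lemma vecNorm_row (h : IsStochastic P) (i : E) : vecNorm (P i) = 1 :=
  (tsum_congr fun j => abs_of_nonneg (h.1 i j)).trans (h.2 i)

lemma abs_le_one (h : IsStochastic P) (i j : E) : |P i j| ≤ 1 := by
  rw [abs_of_nonneg (h.1 i j), ← h.2 i]
  exact (h.summable_row i).le_tsum j fun k _ => h.1 i k

lemma summable_mul_col (h : IsStochastic P) {μ : E → ℝ} (hμ : Summable μ) (j : E) :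
    Summable fun i => μ i * P i j :=
  summable_mul_of_abs_le hμ fun i => h.abs_le_one i j

lemma matPow (h : IsStochastic P) (n : ℕ) : IsStochastic (matPow P n) := by
  induction n with
  | zero =>
    refine ⟨fun i j => ?_, fun i => ?_⟩
    · simp only [_root_.matPow]
      positivity
    · simp [_root_.matPow]
  | succ n ih =>
    refine ⟨fun i j => tsum_nonneg fun k => mul_nonneg (ih.1 i k) (h.1 k j), fun i => ?_⟩
    rw [matPow_succ_apply, tsum_vecMul (ih.summable_row i) h.summable_row
      (fun k => (h.vecNorm_row k).le)]
    simp [h.2, ih.2]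

lemma vecNorm_sub_le_rowSumNorm (h : IsStochastic P) (ht : IsStochastic Pt) (i : E) :
    vecNorm (fun j => P i j - Pt i j) ≤ rowSumNorm (fun i j => P i j - Pt i j) := by
  have hrow : ∀ k, vecNorm (fun j => P k j - Pt k j) ≤ 2 := fun k => by
    have := vecNorm_le_of_abs_le_add (h.summable_row k) (ht.summable_row k) fun j => abs_sub _ _
    rwa [h.vecNorm_row, ht.vecNorm_row, one_add_one_eq_two] at this
  exact le_ciSup (f := fun k => vecNorm fun j => P k j - Pt k j)
    ⟨2, by rintro _ ⟨k, rfl⟩; exact hrow k⟩ i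

end IsStochastic

lemma InvariantFor.vecMul_matPow {π : E → ℝ} {P : E → E → ℝ} (h : InvariantFor π P)
    (hπ : Summable π) (hP : IsStochastic P) (n : ℕ) : vecMul π (matPow P n) = π := by
  induction n with
  | zero =>
    funext j
    simp [vecMul, matPow]
  | succ n ih =>
    have hPn := hP.matPow n
    calc vecMul π (matPow P (n + 1)) = vecMul (vecMul π (matPow P n)) P :=
          vecMul_assoc hπ hPn.summable_row (fun i => (hPn.vecNorm_row i).le) hP.abs_le_one
      _ = π := by rw [ih]; exact funext fun j => (h j).tsum_eq

theorem vecNorm_vecMul_le_of_minorant {A : E → E → ℝ} {δ μ : E → ℝ} (hA : IsStochastic A)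
    (hδ : ∀ i k, δ k ≤ A i k) (hδs : Summable δ) (hμ : Summable μ) (hμ0 : ∑' i, μ i = 0) :
    vecNorm (vecMul μ A) ≤ (1 - ∑' k, δ k) * vecNorm μ := by
  have hshift : vecMul μ A = vecMul μ (fun i k => A i k - δ k) := by
    rw [vecMul_sub_right (L' := fun _ k => δ k) (hA.summable_mul_col hμ)
      fun k => hμ.mul_right (δ k)]
    funext k
    simp [vecMul, tsum_mul_right, hμ0]
  have hrow : ∀ i, vecNorm (fun k => A i k - δ k) = 1 - ∑' k, δ k := fun i => by
    rw [vecNorm, tsum_congr fun k => abs_of_nonneg (sub_nonneg.2 (hδ i k)),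
      (hA.summable_row i).tsum_sub hδs, hA.2 i]
  rw [hshift]
  exact vecNorm_vecMul_le hμ (fun i => (hA.summable_row i).sub hδs) fun i => (hrow i).le

theorem mul_vecNorm_sub_le_of_minorant {A At : E → E → ℝ} {π ν δ : E → ℝ}
    (hA : IsStochastic A) (hAt : IsStochastic At) (hπ : IsProbVec π) (hν : IsProbVec ν)
    (hπA : vecMul π A = π) (hνAt : vecMul ν At = ν) (hδ : ∀ i k, δ k ≤ A i k)
    (hδs : Summable δ) :
    (∑' k, δ k) * vecNorm (fun i => ν i - π i) ≤ rowSumNorm (fun i j => A i j - At i j) := by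
  set μ : E → ℝ := fun i => π i - ν i
  set D := rowSumNorm (fun i j => A i j - At i j)
  have hμ : Summable μ := hπ.summable.sub hν.summable
  have hμ0 : ∑' i, μ i = 0 := by
    simp [μ, hπ.summable.tsum_sub hν.summable, hπ.2, hν.2]
  have hΔ : ∀ i, Summable fun j => A i j - At i j :=
    fun i => (hA.summable_row i).sub (hAt.summable_row i)
  have hdecomp : ∀ j, μ j = vecMul μ A j + vecMul ν (fun i j => A i j - At i j) j := fun j => by
    rw [vecMul_sub_left (hA.summable_mul_col hπ.summable) (hA.summable_mul_col hν.summable),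
      vecMul_sub_right (hA.summable_mul_col hν.summable) (hAt.summable_mul_col hν.summable),
      hπA, hνAt]
    ring
  have hμA := summable_vecMul hμ hA.summable_row fun i => (hA.vecNorm_row i).le
  have hνΔ := summable_vecMul hν.summable hΔ (hA.vecNorm_sub_le_rowSumNorm hAt)
  have key : vecNorm μ ≤ (1 - ∑' k, δ k) * vecNorm μ + D :=
    calc vecNorm μ
        ≤ vecNorm (vecMul μ A) + vecNorm (vecMul ν fun i j => A i j - At i j) :=
          vecNorm_le_of_abs_le_add hμA hνΔ fun j => hdecomp j ▸ abs_add_le _ _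
      _ ≤ (1 - ∑' k, δ k) * vecNorm μ + D * vecNorm ν :=
          add_le_add (vecNorm_vecMul_le_of_minorant hA hδ hδs hμ hμ0)
            (vecNorm_vecMul_le hν.summable hΔ (hA.vecNorm_sub_le_rowSumNorm hAt))
      _ = (1 - ∑' k, δ k) * vecNorm μ + D := by rw [hν.vecNorm_eq_one, mul_one]
  rw [vecNorm_sub_comm]
  linarith

theorem vecNorm_matPow_sub_le {P Pt : E → E → ℝ} (hP : IsStochastic P)
    (hPt : IsStochastic Pt) {C : ℝ} (hC : ∀ k, vecNorm (fun j => P k j - Pt k j) ≤ C)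
    (n : ℕ) (i : E) :
    vecNorm (fun j => matPow P n i j - matPow Pt n i j) ≤ n * C := by
  induction n with
  | zero => simp [vecNorm, matPow]
  | succ n ih =>
    set a := matPow P n i
    set b := matPow Pt n i
    have ha : Summable a := (hP.matPow n).summable_row i
    have hb : Summable b := (hPt.matPow n).summable_row i
    have hΔ : ∀ k, Summable fun j => P k j - Pt k j :=
      fun k => (hP.summable_row k).sub (hPt.summable_row k)
    have hdecomp : ∀ j, matPow P (n + 1) i j - matPow Pt (n + 1) i j =
        vecMul (fun k => a k - b k) P j + vecMul b (fun k j => P k j - Pt k j) j := fun j => by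
      rw [vecMul_sub_left (hP.summable_mul_col ha) (hP.summable_mul_col hb),
        vecMul_sub_right (hP.summable_mul_col hb) (hPt.summable_mul_col hb)]
      simp only [matPow_succ_apply, a, b]
      ring
    have hP1 : ∀ k, vecNorm (P k) ≤ 1 := fun k => (hP.vecNorm_row k).le
    calc vecNorm (fun j => matPow P (n + 1) i j - matPow Pt (n + 1) i j)
        ≤ vecNorm (vecMul (fun k => a k - b k) P) +
            vecNorm (vecMul b fun k j => P k j - Pt k j) :=
          vecNorm_le_of_abs_le_add (summable_vecMul (ha.sub hb) hP.summable_row hP1)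
            (summable_vecMul hb hΔ hC) fun j => hdecomp j ▸ abs_add_le _ _
      _ ≤ 1 * vecNorm (fun k => a k - b k) + C * vecNorm b :=
          add_le_add (vecNorm_vecMul_le (ha.sub hb) hP.summable_row hP1)
            (vecNorm_vecMul_le hb hΔ hC)
      _ ≤ (n + 1 : ℕ) * C := by
          rw [(hPt.matPow n).vecNorm_row i]
          push_cast
          linarith

theorem rowSumNorm_matPow_sub_le {P Pt : E → E → ℝ} (hP : IsStochastic P)
    (hPt : IsStochastic Pt) (n : ℕ) :
    rowSumNorm (fun i j => matPow P n i j - matPow Pt n i j) ≤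
      n * rowSumNorm (fun i j => Pt i j - P i j) := by
  have hC : ∀ k, vecNorm (fun j => P k j - Pt k j) ≤ rowSumNorm (fun i j => Pt i j - P i j) :=
    fun k => (vecNorm_sub_comm _ _).trans_le (hPt.vecNorm_sub_le_rowSumNorm hP k)
  exact Real.iSup_le (vecNorm_matPow_sub_le hP hPt hC n) <|
    mul_nonneg n.cast_nonneg <| Real.iSup_nonneg fun i => tsum_nonneg fun j => abs_nonneg _

theorem stmt3_general {E : Type*} (P Pt : E → E → ℝ) (pi nu : E → ℝ) (m : ℕ)
    (hP : IsStochastic P) (hPt : IsStochastic Pt)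
    (hpi : IsProbVec pi) (hnu : IsProbVec nu)
    (hpiinv : InvariantFor pi P) (hnuinv : InvariantFor nu Pt)
    (hpos : 0 < ∑' k, ⨅ i, matPow P m i k) :
    vecNorm (fun i => nu i - pi i) ≤
        rowSumNorm (fun i j => matPow P m i j - matPow Pt m i j) /
          (∑' k, ⨅ i, matPow P m i k) ∧
      rowSumNorm (fun i j => matPow P m i j - matPow Pt m i j) /
          (∑' k, ⨅ i, matPow P m i k) ≤
        (m / ∑' k, ⨅ i, matPow P m i k) * rowSumNorm (fun i j => Pt i j - P i j) := by
  have hA := hP.matPow m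
  have hmin : ∀ i k, ⨅ i', matPow P m i' k ≤ matPow P m i k := fun i k =>
    ciInf_le ⟨0, by rintro _ ⟨i', rfl⟩; exact hA.1 i' k⟩ i
  have hsum : Summable fun k => ⨅ i, matPow P m i k := summable_of_tsum_ne_zero hpos.ne'
  have ha := mul_vecNorm_sub_le_of_minorant hA (hPt.matPow m) hpi hnu
    (hpiinv.vecMul_matPow hpi.summable hP m) (hnuinv.vecMul_matPow hnu.summable hPt m) hmin hsum
  refine ⟨(le_div_iff₀ hpos).2 (by linarith), ?_⟩
  rw [div_mul_eq_mul_div]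
  exact div_le_div_of_nonneg_right (rowSumNorm_matPow_sub_le hP hPt m) hpos.le

/-- with δ_m(k) = inf_i P^m(i,k), if ∑_k δ_m(k) > 0 then
‖ν − π‖ ≤ ‖P^m − P̃^m‖/∑_k δ_m(k) ≤ (m/∑_k δ_m(k))·‖P̃ − P‖. -/
theorem stmt3 {E : Type*} [Countable E] (P Pt : E → E → ℝ) (pi nu : E → ℝ) (m : ℕ)
    (hP : IsStochastic P) (hPt : IsStochastic Pt)
    (hPirr : IsIrred P) (hPtirr : IsIrred Pt)
    (hpi : IsProbVec pi) (hnu : IsProbVec nu)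
    (hpiinv : InvariantFor pi P) (hnuinv : InvariantFor nu Pt)
    (hm : 1 ≤ m)
    (hpos : 0 < ∑' k, ⨅ i, matPow P m i k) :
    vecNorm (fun i => nu i - pi i) ≤
        rowSumNorm (fun i j => matPow P m i j - matPow Pt m i j) /
          (∑' k, ⨅ i, matPow P m i k) ∧
      rowSumNorm (fun i j => matPow P m i j - matPow Pt m i j) /
          (∑' k, ⨅ i, matPow P m i k) ≤
        (m / ∑' k, ⨅ i, matPow P m i k) * rowSumNorm (fun i j => Pt i j - P i j) :=
  stmt3_general P Pt pi nu m hP hPt hpi hnu hpiinv hnuinv hpos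

end
end
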